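/- arXiv:1909.13613 — 4 statements merged into one kernel-verified Lean document; each statement's English description precedes it below -/
import Mathlib

section
/- Let α, p' satisfy αp' > n, and let c > 0. Then ∫_{[c,∞)ⁿ} ‖y‖₁^{−αp'} dy = 1/(w_α (cn)^{αp'−n}), where w_α = (αp'−1)(αp'−2)⋯(αp'−n). -/
/-!
For `a ≥ 0` put `I_n(a) = ∫_{[c,∞)ⁿ} (a + ∑ yᵢ)^(-β) dy`. Splitting off the first coordinate,
`I_{n+1}(a) = ∫_c^∞ I_n(a + x) dx`, and `I_0(a) = a^(-β)`, so by induction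
`I_n(a) = (a + cn)^(n-β) / ((β-1)(β-2)⋯(β-n))`, each step being the integral of a single power
`∫_c^∞ (a + cn + x)^(n-β) dx`. Working with lower Lebesgue integrals avoids any integrability
bookkeeping until the very end.
-/

open MeasureTheory Finset
open scoped ENNReal

theorem lintegral_pi_fin_succ {α : Type*} [MeasurableSpace α] (μ : Measure α) [SigmaFinite μ]
    {n : ℕ} {f : (Fin (n + 1) → α) → ℝ≥0∞} (hf : Measurable f) :
    ∫⁻ y, f y ∂Measure.pi (fun _ => μ) =
      ∫⁻ x, ∫⁻ y, f (Fin.cons x y) ∂Measure.pi (fun _ => μ) ∂μ := by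
  rw [← (measurePreserving_piFinSuccAbove (fun _ => μ) 0).symm.lintegral_comp hf]
  refine (lintegral_prod _ (hf.comp (MeasurableEquiv.measurable _)).aemeasurable).trans ?_
  simp [MeasurableEquiv.piFinSuccAbove_symm_apply, Fin.insertNthEquiv, Fin.insertNth_zero']

theorem lintegral_Ici_rpow_neg_add {a b c : ℝ} (hb : 1 < b) (hac : 0 < a + c) :
    ∫⁻ x in Set.Ici c, ENNReal.ofReal ((a + x) ^ (-b)) =
      ENNReal.ofReal ((a + c) ^ (1 - b) / (b - 1)) := by
  have hshift := (measurePreserving_add_left volume a).setLIntegral_comp_preimage_emb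
    (measurableEmbedding_addLeft a) (fun y => ENNReal.ofReal (y ^ (-b))) (Set.Ici (a + c))
  rw [Set.preimage_const_add_Ici, add_sub_cancel_left] at hshift
  rw [hshift, ← restrict_Ioi_eq_restrict_Ici, ← ofReal_integral_eq_lintegral_ofReal
      (integrableOn_Ioi_rpow_of_lt (by linarith) hac)
      ((ae_restrict_iff' measurableSet_Ioi).2 (ae_of_all _ fun x hx =>
        Real.rpow_nonneg (hac.trans hx).le _)),
    integral_Ioi_rpow_of_lt (by linarith) hac]
  congr 1
  rw [show -b + 1 = 1 - b by ring, neg_div, ← div_neg, neg_sub]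

theorem prod_range_sub_succ_pos {β : ℝ} {n : ℕ} (h : (n : ℝ) < β) :
    0 < ∏ i ∈ range n, (β - (i + 1)) := by
  refine prod_pos fun i hi => ?_
  have : (i : ℝ) + 1 ≤ n := by exact_mod_cast mem_range.mp hi
  linarith

theorem lintegral_pi_Ici_rpow_neg_add_sum {a c β : ℝ} (ha : 0 ≤ a) (hc : 0 < c) :
    ∀ n : ℕ, (n : ℝ) < β →
      ∫⁻ y, ENNReal.ofReal ((a + ∑ i, y i) ^ (-β))
          ∂Measure.pi (fun _ : Fin n => volume.restrict (Set.Ici c)) =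
        ENNReal.ofReal ((a + c * n) ^ ((n : ℝ) - β) / ∏ i ∈ range n, (β - (i + 1)))
  | 0, _ => by simp
  | n + 1, hβ => by
    push_cast at hβ ⊢
    have hP := prod_range_sub_succ_pos (β := β) (n := n) (by linarith)
    have hinner : ∀ x ∈ Set.Ici c,
        ∫⁻ y, ENNReal.ofReal ((a + ∑ i, (Fin.cons x y : Fin (n + 1) → ℝ) i) ^ (-β))
            ∂Measure.pi (fun _ : Fin n => volume.restrict (Set.Ici c)) =
          ENNReal.ofReal ((a + c * n + x) ^ (-(β - n))) *
            (ENNReal.ofReal (∏ i ∈ range n, (β - (i + 1))))⁻¹ := by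
      intro x hx
      simp only [Fin.sum_cons, ← add_assoc]
      rw [lintegral_pi_Ici_rpow_neg_add_sum (by linarith [hx.out]) hc n (by linarith),
        ENNReal.ofReal_div_of_pos hP, div_eq_mul_inv, add_right_comm, neg_sub]
    rw [lintegral_pi_fin_succ _ (by fun_prop), setLIntegral_congr_fun measurableSet_Ici hinner,
      lintegral_mul_const' _ _ (ENNReal.inv_ne_top.2 (ENNReal.ofReal_pos.2 hP).ne'),
      lintegral_Ici_rpow_neg_add (by linarith) (by positivity), ← div_eq_mul_inv,
      ← ENNReal.ofReal_div_of_pos hP, prod_range_succ, div_div, mul_comm (β - n - 1),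
      show a + c * n + c = a + c * (n + 1) by ring, show 1 - (β - n) = n + 1 - β by ring,
      show β - n - 1 = β - (n + 1) by ring]

theorem stmt4_general (n : ℕ) (α p' c : ℝ) (hq : α * p' > n) (hc : 0 < c) :
    (∫ y in Set.Ici (fun _ => c : Fin n → ℝ), (∑ i, y i) ^ (-(α * p'))) =
      1 / ((∏ i ∈ Finset.range n, (α * p' - (i + 1))) * (c * n) ^ (α * p' - n)) := by
  have hrestrict : volume.restrict (Set.Ici (fun _ => c : Fin n → ℝ)) =
      Measure.pi fun _ => volume.restrict (Set.Ici c) := by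
    rw [← Set.pi_univ_Ici, volume_pi, Measure.restrict_pi_pi]
  have hnonneg : 0 ≤ᵐ[Measure.pi fun _ : Fin n => volume.restrict (Set.Ici c)]
      fun y => (∑ i, y i) ^ (-(α * p')) := by
    rw [← hrestrict]
    filter_upwards [ae_restrict_mem measurableSet_Ici] with y hy
    exact Real.rpow_nonneg (sum_nonneg fun i _ => hc.le.trans (hy i)) _
  rw [hrestrict, integral_eq_lintegral_of_nonneg_ae hnonneg
    (by fun_prop : Measurable _).aestronglyMeasurable]
  have h := lintegral_pi_Ici_rpow_neg_add_sum le_rfl hc n hq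
  simp only [zero_add] at h
  rw [h, ENNReal.toReal_ofReal (div_nonneg (by positivity) (prod_range_sub_succ_pos hq).le),
    show (n : ℝ) - α * p' = -(α * p' - n) by ring, Real.rpow_neg (by positivity), one_div,
    mul_inv, div_eq_inv_mul]

theorem stmt4 (n : ℕ) (hn : 0 < n) (α p' c : ℝ) (hq : α * p' > n) (hc : 0 < c) :
    (∫ y in Set.Ici (fun _ => c : Fin n → ℝ), (∑ i, y i) ^ (-(α * p'))) =
      1 / ((∏ i ∈ Finset.range n, (α * p' - (i + 1))) * (c * n) ^ (α * p' - n)) :=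
  stmt4_general n α p' c hq hc
end

section
/- Let K satisfy |K(x,y)| ≤ C/(1+‖x−y‖₁)^α, let η ∈ (0, 2/n), γ ∈ ℝⁿ, and define φ_γ(x) = η^{−n/p} ∫_{[−η/2,η/2]ⁿ} K(γ+z, x) dz. Then for all x ∈ ℝⁿ, |φ_γ(x)| ≤ η^{n/p'} · C / (1 − nη/2 + ‖γ−x‖₁)^α. -/
/-! On the cube `[-η/2, η/2]ⁿ` every `z` has `‖z‖₁ ≤ nη/2`, so by the triangle inequality
`1 + ‖γ + z - x‖₁ ≥ 1 - nη/2 + ‖γ - x‖₁ > 0` and the decay bound on `K` holds uniformly on the cube.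
Integrating over the cube multiplies by its volume `ηⁿ`, and `η^(-n/p) · ηⁿ = η^(n/p')`. -/

open MeasureTheory Set

section Cube

variable {ι : Type*} [Fintype ι]

lemma sum_abs_le_of_mem_Icc_const {r : ℝ} {z : ι → ℝ} (hz : z ∈ Icc (fun _ => -r) fun _ => r) :
    ∑ i, |z i| ≤ Fintype.card ι * r := by
  calc ∑ i, |z i| ≤ ∑ _i : ι, r := Finset.sum_le_sum fun i _ => abs_le.mpr ⟨hz.1 i, hz.2 i⟩
    _ = Fintype.card ι * r := by simp

lemma sum_abs_sub_le_sum_abs_add_sub {a b c : ι → ℝ} :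
    ∑ i, |a i - b i| ≤ ∑ i, |a i - c i| + ∑ i, |c i - b i| := by
  rw [← Finset.sum_add_distrib]
  exact Finset.sum_le_sum fun i _ => abs_sub_le _ _ _

lemma one_sub_add_sum_abs_le_of_mem_Icc_const {r : ℝ} {γ x z : ι → ℝ}
    (hz : z ∈ Icc (fun _ => -r) fun _ => r) :
    1 - Fintype.card ι * r + ∑ i, |γ i - x i| ≤ 1 + ∑ i, |(γ + z) i - x i| := by
  have htri := sum_abs_sub_le_sum_abs_add_sub (a := γ) (b := x) (c := γ + z)
  have hshift : ∑ i, |γ i - (γ + z) i| = ∑ i, |z i| := by simp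
  linarith [sum_abs_le_of_mem_Icc_const hz]

lemma abs_le_div_rpow_of_mem_Icc_const {C α r : ℝ} (hC : 0 ≤ C) (hα : 0 ≤ α)
    {K : (ι → ℝ) → (ι → ℝ) → ℝ} (hK : ∀ x y, |K x y| ≤ C / (1 + ∑ i, |x i - y i|) ^ α)
    {γ x z : ι → ℝ} (hz : z ∈ Icc (fun _ => -r) fun _ => r)
    (hD : 0 < 1 - Fintype.card ι * r + ∑ i, |γ i - x i|) :
    |K (γ + z) x| ≤ C / (1 - Fintype.card ι * r + ∑ i, |γ i - x i|) ^ α :=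
  (hK _ _).trans <| div_le_div_of_nonneg_left hC (Real.rpow_pos_of_pos hD α)
    (Real.rpow_le_rpow hD.le (one_sub_add_sum_abs_le_of_mem_Icc_const hz) hα)

lemma volume_Icc_neg_half_half_toReal {η : ℝ} (hη : 0 ≤ η) :
    (volume (Icc (fun _ : ι => -(η / 2)) fun _ => η / 2)).toReal = η ^ Fintype.card ι := by
  rw [Real.volume_Icc_pi_toReal fun _ => by linarith]
  simp [show η / 2 - -(η / 2) = η by ring]

lemma abs_setIntegral_Icc_neg_half_half_le {η M : ℝ} (hη : 0 ≤ η) {f : (ι → ℝ) → ℝ}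
    (hf : ∀ z ∈ Icc (fun _ => -(η / 2)) (fun _ => η / 2), |f z| ≤ M) :
    |∫ z in Icc (fun _ => -(η / 2)) (fun _ => η / 2), f z| ≤ M * η ^ Fintype.card ι := by
  rw [← volume_Icc_neg_half_half_toReal hη]
  exact norm_setIntegral_le_of_norm_le_const isCompact_Icc.measure_lt_top
    fun z hz => (Real.norm_eq_abs _).trans_le (hf z hz)

end Cube

lemma Real.rpow_neg_div_mul_pow_eq_rpow_div_of_conj {η p p' : ℝ} (hη : 0 < η)
    (hpp' : 1 / p + 1 / p' = 1) (m : ℕ) :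
    η ^ (-(m / p)) * η ^ m = η ^ ((m : ℝ) / p') := by
  have hexp : -((m : ℝ) / p) + m = m / p' := by
    rw [div_eq_mul_one_div (m : ℝ) p', ← sub_eq_of_eq_add' hpp'.symm]; ring
  rw [← Real.rpow_natCast η m, ← Real.rpow_add hη, hexp]

theorem stmt5_general (n : ℕ) (hn : 0 < n) (p p' C α η : ℝ)
    (hpp' : 1 / p + 1 / p' = 1) (hC : 0 < C) (hα : 0 < α)
    (hη : 0 < η) (hη2 : η < 2 / n)
    (K : (Fin n → ℝ) → (Fin n → ℝ) → ℝ)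
    (hK : ∀ x y, |K x y| ≤ C / (1 + ∑ i, |x i - y i|) ^ α)
    (γ x : Fin n → ℝ) :
    |η ^ (-(n / p)) *
        ∫ z in Set.Icc (fun _ => -(η / 2)) (fun _ => η / 2 : Fin n → ℝ), K (γ + z) x| ≤
      η ^ ((n : ℝ) / p') * C / (1 - n * η / 2 + ∑ i, |γ i - x i|) ^ α := by
  have hnη : n * η < 2 := (lt_div_iff₀' (by exact_mod_cast hn)).mp hη2
  have hD : 0 < 1 - Fintype.card (Fin n) * (η / 2) + ∑ i, |γ i - x i| := by
    rw [Fintype.card_fin]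
    linarith [Finset.sum_nonneg fun i (_ : i ∈ Finset.univ) => abs_nonneg (γ i - x i)]
  have hint := abs_setIntegral_Icc_neg_half_half_le hη.le fun z hz =>
    abs_le_div_rpow_of_mem_Icc_const hC.le hα.le hK (γ := γ) (x := x) hz hD
  rw [Fintype.card_fin, ← mul_div_assoc] at hint
  rw [abs_mul, abs_of_pos (Real.rpow_pos_of_pos hη _),
    ← Real.rpow_neg_div_mul_pow_eq_rpow_div_of_conj hη hpp' n]
  calc η ^ (-(n / p)) * |∫ z in Icc (fun _ => -(η / 2)) (fun _ => η / 2), K (γ + z) x|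
      ≤ η ^ (-(n / p)) * (C / (1 - n * η / 2 + ∑ i, |γ i - x i|) ^ α * η ^ n) := by gcongr
    _ = _ := by ring

theorem stmt5 (n : ℕ) (hn : 0 < n) (p p' C α η : ℝ) (hp : 1 ≤ p)
    (hpp' : 1 / p + 1 / p' = 1) (hC : 0 < C) (hα : 0 < α)
    (hη : 0 < η) (hη2 : η < 2 / n)
    (K : (Fin n → ℝ) → (Fin n → ℝ) → ℝ)
    (hKmeas : Measurable (Function.uncurry K))
    (hK : ∀ x y, |K x y| ≤ C / (1 + ∑ i, |x i - y i|) ^ α)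
    (γ x : Fin n → ℝ) :
    |η ^ (-(n / p)) *
        ∫ z in Set.Icc (fun _ => -(η / 2)) (fun _ => η / 2 : Fin n → ℝ), K (γ + z) x| ≤
      η ^ ((n : ℝ) / p') * C / (1 - n * η / 2 + ∑ i, |γ i - x i|) ^ α :=
  stmt5_general n hn p p' C α η hpp' hC hα hη hη2 K hK γ x
end

section
/- Let f, g be measurable on C_R with ‖f‖_{L^∞(C_R)} ≤ k, ‖g‖_{L^∞(C_R)} ≤ k, and ‖f‖_{L^p(C_R)}^p ≤ 1, ‖g‖_{L^p(C_R)}^p ≤ 1. Let x be uniform on C_R and Z(h) = |h(x)|^p − (1/Rⁿ)∫_{C_R}|h|^p. Then Var(Z(f) − Z(g)) ≤ (2p/Rⁿ) k^{p−1} ‖f − g‖_{L^∞(C_R)}. -/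
open MeasureTheory ProbabilityTheory Finset

lemma pow_sub_pow_abs_le {p : ℕ} (hp : 1 ≤ p) {k a b : ℝ} (ha : |a| ≤ k) (hb : |b| ≤ k) :
    abs (|a| ^ p - |b| ^ p) ≤ p * k ^ (p - 1) * |a - b| := by
  have hk : 0 ≤ k := le_trans (abs_nonneg a) ha
  have h := geom_sum₂_mul (|a|) (|b|) p
  have habs : abs (|a| ^ p - |b| ^ p) =
      abs (∑ i ∈ Finset.range p, |a| ^ i * |b| ^ (p - 1 - i)) * abs (|a| - |b|) := by
    rw [← abs_mul, h]
  rw [habs]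
  have h1 : abs (∑ i ∈ Finset.range p, |a| ^ i * |b| ^ (p - 1 - i)) ≤ p * k ^ (p - 1) := by
    calc abs (∑ i ∈ Finset.range p, |a| ^ i * |b| ^ (p - 1 - i))
        ≤ ∑ i ∈ Finset.range p, abs (|a| ^ i * |b| ^ (p - 1 - i)) :=
          Finset.abs_sum_le_sum_abs _ _
      _ ≤ ∑ _i ∈ Finset.range p, k ^ (p - 1) := by
          apply Finset.sum_le_sum
          intro i hi
          rw [Finset.mem_range] at hi
          have : |a| ^ i * |b| ^ (p - 1 - i) ≤ k ^ i * k ^ (p - 1 - i) :=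
            mul_le_mul (pow_le_pow_left₀ (abs_nonneg a) ha i)
              (pow_le_pow_left₀ (abs_nonneg b) hb _) (by positivity) (by positivity)
          rw [abs_of_nonneg (by positivity)]
          calc |a| ^ i * |b| ^ (p - 1 - i) ≤ k ^ i * k ^ (p - 1 - i) := this
            _ = k ^ (i + (p - 1 - i)) := by rw [pow_add]
            _ = k ^ (p - 1) := by congr 1; omega
      _ = p * k ^ (p - 1) := by simp [Finset.sum_const, mul_comm]
  exact mul_le_mul h1 (abs_abs_sub_abs_le_abs_sub a b) (abs_nonneg _) (by positivity)

lemma intOn_of_bdd {α : Type*} [MeasurableSpace α] {μ : Measure α} {f : α → ℝ} {s : Set α}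
    (hm : Measurable f) (hs : MeasurableSet s) (hvol : μ s < ⊤) {C : ℝ}
    (hb : ∀ y ∈ s, |f y| ≤ C) : IntegrableOn f s μ :=
  Integrable.mono' ((integrableOn_const_iff (C := C)).mpr (Or.inr hvol)) hm.aestronglyMeasurable
    ((ae_restrict_iff' hs).2 (ae_of_all _ fun y hy => by
      simpa [Real.norm_eq_abs] using hb y hy))

theorem stmt13 (n : ℕ) (p : ℕ) (hp : 1 ≤ p) (R k M : ℝ) (hR : 0 < R) (hk : 0 < k)
    (hM : 0 ≤ M)
    (Ω : Type*) [MeasurableSpace Ω] (P : Measure Ω) [IsProbabilityMeasure P]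
    (x : Ω → (Fin n → ℝ)) (hxm : Measurable x)
    (CR : Set (Fin n → ℝ)) (hCR : CR = Set.Icc (fun _ => -(R / 2)) (fun _ => R / 2))
    (hlaw : Measure.map x P = (ENNReal.ofReal (R ^ n))⁻¹ • volume.restrict CR)
    (f g : (Fin n → ℝ) → ℝ) (hfm : Measurable f) (hgm : Measurable g)
    (hfk : ∀ y ∈ CR, |f y| ≤ k) (hgk : ∀ y ∈ CR, |g y| ≤ k)
    (hfp : (∫ y in CR, |f y| ^ p) ≤ 1) (hgp : (∫ y in CR, |g y| ^ p) ≤ 1)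
    (hfg : ∀ y ∈ CR, |f y - g y| ≤ M) :
    variance (fun ω =>
        (|f (x ω)| ^ p - (1 / R ^ n) * ∫ y in CR, |f y| ^ p) -
        (|g (x ω)| ^ p - (1 / R ^ n) * ∫ y in CR, |g y| ^ p)) P ≤
      (2 * p / R ^ n) * k ^ (p - 1) * M := by
  have hRn : (0:ℝ) < R ^ n := by positivity
  set u : (Fin n → ℝ) → ℝ := fun y => |f y| ^ p - |g y| ^ p with hu
  set c : ℝ := (1 / R ^ n) * (∫ y in CR, |f y| ^ p) -
      (1 / R ^ n) * ∫ y in CR, |g y| ^ p with hc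
  have hum : Measurable u := ((hfm.abs.pow_const p).sub (hgm.abs.pow_const p))
  have hCRm : MeasurableSet CR := hCR ▸ measurableSet_Icc
  have hvol : volume CR < ⊤ := by
    rw [hCR]; exact IsCompact.measure_lt_top isCompact_Icc
  -- a.e. x ω ∈ CR
  have hxCR : ∀ᵐ ω ∂P, x ω ∈ CR := by
    have h0 : (Measure.map x P) CRᶜ = 0 := by
      rw [hlaw, Measure.smul_apply, Measure.restrict_apply hCRm.compl]
      simp
    have h1 : ∀ᵐ y ∂(Measure.map x P), y ∈ CR := by
      rw [ae_iff]; exact h0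
    exact (ae_map_iff hxm.aemeasurable hCRm).mp h1
  -- bound on |u| on CR
  set Cb : ℝ := p * k ^ (p - 1) * M with hCb
  have hCb0 : 0 ≤ Cb := by positivity
  have hubd : ∀ y ∈ CR, |u y| ≤ Cb := fun y hy =>
    le_trans (pow_sub_pow_abs_le hp (hfk y hy) (hgk y hy))
      (by
        have := hfg y hy
        have h2 : (0:ℝ) ≤ (p:ℝ) * k ^ (p - 1) := by positivity
        calc (p:ℝ) * k ^ (p-1) * |f y - g y| ≤ (p:ℝ) * k ^ (p-1) * M :=
          mul_le_mul_of_nonneg_left this h2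
        _ = Cb := rfl)
  have hubd2 : ∀ y ∈ CR, |u y| ≤ |f y| ^ p + |g y| ^ p := fun y hy => by
    calc |u y| ≤ |(|f y| ^ p)| + |(|g y| ^ p)| := abs_sub _ _
      _ = |f y| ^ p + |g y| ^ p := by
        rw [abs_of_nonneg (pow_nonneg (abs_nonneg (f y)) p),
            abs_of_nonneg (pow_nonneg (abs_nonneg (g y)) p)]
  -- integrability
  have hfint : IntegrableOn (fun y => |f y| ^ p) CR volume :=
    intOn_of_bdd (hfm.abs.pow_const p) hCRm hvol (C := k ^ p) (fun y hy => by
      rw [abs_of_nonneg (by positivity)]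
      exact pow_le_pow_left₀ (abs_nonneg _) (hfk y hy) p)
  have hgint : IntegrableOn (fun y => |g y| ^ p) CR volume :=
    intOn_of_bdd (hgm.abs.pow_const p) hCRm hvol (C := k ^ p) (fun y hy => by
      rw [abs_of_nonneg (by positivity)]
      exact pow_le_pow_left₀ (abs_nonneg _) (hgk y hy) p)
  have husq : IntegrableOn (fun y => u y ^ 2) CR volume :=
    intOn_of_bdd (hum.pow_const 2) hCRm hvol (C := Cb ^ 2) (fun y hy => by
      rw [abs_of_nonneg (sq_nonneg _)]
      calc u y ^ 2 = |u y| ^ 2 := (sq_abs _).symm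
        _ ≤ Cb ^ 2 := pow_le_pow_left₀ (abs_nonneg _) (hubd y hy) 2)
  have huxint : Integrable (fun ω => u (x ω)) P :=
    Integrable.mono' (integrable_const Cb) (hum.comp hxm).aestronglyMeasurable
      (by filter_upwards [hxCR] with ω hω
          simpa [Real.norm_eq_abs] using hubd _ hω)
  -- Step A : the function equals u ∘ x minus a constant, and variance ignores constants
  have heq : (fun ω =>
        (|f (x ω)| ^ p - (1 / R ^ n) * ∫ y in CR, |f y| ^ p) -
        (|g (x ω)| ^ p - (1 / R ^ n) * ∫ y in CR, |g y| ^ p)) =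
      fun ω => u (x ω) - c := by
    funext ω; simp only [hu, hc]; ring
  rw [heq]
  have hmean : P[fun ω => u (x ω) - c] = P[fun ω => u (x ω)] - c := by
    rw [integral_sub huxint (integrable_const c), integral_const]
    simp
  have hA : variance (fun ω => u (x ω) - c) P = variance (fun ω => u (x ω)) P := by
    rw [variance, variance, evariance, evariance]
    congr 1
    apply lintegral_congr
    intro ω
    have : u (x ω) - c - P[fun ω => u (x ω) - c] = u (x ω) - P[fun ω' => u (x ω')] := by
      rw [hmean]; ring
    rw [this]
  rw [hA]
  -- Step B : variance ≤ second moment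
  have hB : variance (fun ω => u (x ω)) P ≤ P[(fun ω => u (x ω)) ^ 2] :=
    variance_le_expectation_sq (hum.comp hxm).aestronglyMeasurable
  have hB' : P[(fun ω => u (x ω)) ^ 2] = ∫ ω, u (x ω) ^ 2 ∂P := by
    simp [Pi.pow_apply]
  -- Step C : second moment via the law
  have hC : ∫ ω, u (x ω) ^ 2 ∂P = (R ^ n)⁻¹ * ∫ y in CR, u y ^ 2 := by
    have : ∫ ω, u (x ω) ^ 2 ∂P = ∫ y, u y ^ 2 ∂(Measure.map x P) := by
      rw [integral_map hxm.aemeasurable (hum.pow_const 2).aestronglyMeasurable]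
    rw [this, hlaw, integral_smul_measure, smul_eq_mul, ENNReal.toReal_inv,
      ENNReal.toReal_ofReal hRn.le]
  -- Step D : bound the set integral
  have hD : ∫ y in CR, u y ^ 2 ≤ Cb * 2 := by
    have hmono : ∫ y in CR, u y ^ 2 ≤ ∫ y in CR, Cb * (|f y| ^ p + |g y| ^ p) := by
      apply setIntegral_mono_on husq (((hfint.add hgint).const_mul Cb)) hCRm
      intro y hy
      calc u y ^ 2 = |u y| * |u y| := by rw [← sq_abs]; ring
        _ ≤ Cb * (|f y| ^ p + |g y| ^ p) :=
          mul_le_mul (hubd y hy) (hubd2 y hy) (abs_nonneg _)  hCb0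
    calc ∫ y in CR, u y ^ 2 ≤ ∫ y in CR, Cb * (|f y| ^ p + |g y| ^ p) := hmono
      _ = Cb * ((∫ y in CR, |f y| ^ p) + ∫ y in CR, |g y| ^ p) := by
        rw [integral_const_mul, integral_add hfint hgint]
      _ ≤ Cb * (1 + 1) := by
        apply mul_le_mul_of_nonneg_left _ hCb0
        exact add_le_add hfp hgp
      _ = Cb * 2 := by ring
  calc variance (fun ω => u (x ω)) P ≤ ∫ ω, u (x ω) ^ 2 ∂P := by rw [← hB']; exact hB
    _ = (R ^ n)⁻¹ * ∫ y in CR, u y ^ 2 := hC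
    _ ≤ (R ^ n)⁻¹ * (Cb * 2) := by
        apply mul_le_mul_of_nonneg_left hD (by positivity)
    _ = (2 * p / R ^ n) * k ^ (p - 1) * M := by
        rw [hCb]; field_simp
end

section
/- For u > 1 and v > 0, Σ_{l=2}^∞ e^{−u^l v} ≤ e^{−uv} / (u v log u). -/
theorem stmt16 (u v : ℝ) (hu : 1 < u) (hv : 0 < v) :
    ∑' l : ℕ, Real.exp (-(u ^ (l + 2)) * v) ≤
      Real.exp (-(u * v)) / (u * v * Real.log u) := by
  have hu0 : (0:ℝ) < u := lt_trans one_pos hu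
  have hL : 0 < Real.log u := Real.log_pos hu
  set x := u * v * Real.log u with hx
  have hx0 : 0 < x := by positivity
  set r := Real.exp (-x) with hr
  have hr0 : 0 < r := Real.exp_pos _
  have hr1 : r < 1 := by
    rw [hr, Real.exp_lt_one_iff]; linarith
  have key : ∀ l : ℕ, Real.exp (-(u ^ (l + 2)) * v) ≤
      Real.exp (-(u * v)) * (r ^ l * r) := by
    intro l
    have hrp : r ^ l * r = Real.exp ((l + 1 : ℝ) * (-x)) := by
      rw [hr, ← Real.exp_nat_mul, ← Real.exp_add]
      ring_nf
    rw [hrp, ← Real.exp_add]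
    apply Real.exp_le_exp.mpr
    have h1 : (1 + (l + 1 : ℝ) * Real.log u) ≤ u ^ (l + 1) := by
      have h := Real.add_one_le_exp ((l + 1 : ℝ) * Real.log u)
      have h2 : Real.exp ((l + 1 : ℝ) * Real.log u) = u ^ (l + 1) := by
        have := Real.exp_nat_mul (Real.log u) (l + 1)
        push_cast at this
        rw [this, Real.exp_log hu0]
      linarith [h2 ▸ h]
    have hpow : u ^ (l + 2) = u ^ (l + 1) * u := by ring
    have huv : 0 < u * v := mul_pos hu0 hv
    rw [hx]
    nlinarith [mul_le_mul_of_nonneg_right h1 huv.le]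
  have hgeo : Summable fun l : ℕ => r ^ l :=
    summable_geometric_of_lt_one hr0.le hr1
  have hsumg : Summable (fun l : ℕ => Real.exp (-(u * v)) * (r ^ l * r)) :=
    ((hgeo.mul_right r).mul_left _)
  have hsumL : Summable (fun l : ℕ => Real.exp (-(u ^ (l + 2)) * v)) :=
    Summable.of_nonneg_of_le (fun l => (Real.exp_pos _).le) key hsumg
  have h2 := Summable.tsum_le_tsum key hsumL hsumg
  have h3 : ∑' l : ℕ, Real.exp (-(u * v)) * (r ^ l * r) =
      Real.exp (-(u * v)) * ((1 - r)⁻¹ * r) := by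
    rw [tsum_mul_left, tsum_mul_right, tsum_geometric_of_lt_one hr0.le hr1]
  rw [h3] at h2
  refine h2.trans ?_
  rw [div_eq_mul_inv]
  apply mul_le_mul_of_nonneg_left _ (Real.exp_pos _).le
  have h1r : 0 < 1 - r := by linarith
  have hre : r * Real.exp x = 1 := by
    rw [hr, ← Real.exp_add]; simp
  have hxe : x + 1 ≤ Real.exp x := by linarith [Real.add_one_le_exp x]
  rw [mul_comm, ← div_eq_mul_inv, ← one_div, div_le_div_iff₀ h1r hx0]
  nlinarith [mul_le_mul_of_nonneg_left hxe hr0.le]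
end
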